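/- Let E and E₁ be finite-dimensional real inner product spaces, A : E → E₁ a surjective linear map, f ∈ E₁, and F := {v ∈ E : Av = f}. Let J : E → [0, ∞), and suppose there are 0 < ω₀ < ω such that v ↦ J(v) + ω₀‖v‖² is convex (so that for every u ∈ E the function J_{ω,u}(v) := J(v) + ω‖v − u‖² is 2(ω − ω₀)-strongly convex and coercive, hence has a unique minimizer on F). Let (v_ℓ)_{ℓ≥0} be a sequence in E and, for ℓ ≥ 1, let v̄_ℓ be the unique minimizer of J_{ω,v_{ℓ-1}} on F. Assume there exist constants C₁, C₂ ≥ 0 and α > 1 such that ‖v_ℓ − v̄_ℓ‖² ≤ (C₁ + C₂ J_{ω,v_{ℓ-1}}(v̄_ℓ)) ℓ^{−α} for all ℓ ≥ 1. Then: (i) v_ℓ − v_{ℓ-1} → 0 as ℓ → ∞; (ii) the sequence (J(v̄_ℓ))_{ℓ≥1} converges; (iii) if (v_ℓ) is bounded, then (J(v_ℓ))_{ℓ≥1} converges; (iv) if J is coercive on F (i.e., J(w_n) → ∞ for every sequence (w_n) in F with ‖w_n‖ → ∞), then (v_ℓ) is bounded. -/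

import Mathlib

/-!
Write `m_ℓ := J_{ω,v_{ℓ-1}}(v̄_ℓ)` and `e_ℓ := ‖v_ℓ - v̄_ℓ‖²`. Testing the minimality of `v̄_{ℓ+1}` against `v̄_ℓ`
gives `J(v̄_{ℓ+1}) + ω‖v̄_{ℓ+1} - v_ℓ‖² ≤ J(v̄_ℓ) + ω e_ℓ`. Combined with `e_ℓ ≤ (C₁ + C₂ m_ℓ) ℓ^{-α}` this yields
`m_{ℓ+1} + 1 ≤ (m_ℓ + 1)(1 + ω (C₁ + C₂) ℓ^{-α})`, so `m` is bounded by a convergent product and `e` is summable.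
The same inequality is then a quasi-Fejér estimate for `J(v̄_ℓ)` with summable perturbation: `J(v̄_ℓ)` converges
and `‖v̄_{ℓ+1} - v_ℓ‖²` is summable, which together with `e_ℓ → 0` gives (i). As `J` plus a quadratic is convex,
`J` is continuous, hence uniformly continuous on bounded sets, which carries the limit of `J(v̄_ℓ)` over to `J(v_ℓ)`.
Under coercivity the bound on `J(v̄_ℓ)` bounds `v̄_ℓ`, and `v_ℓ - v̄_ℓ → 0` then bounds `v_ℓ`.
-/

open Filter Topology Uniformity Set Bornology

theorem le_mul_exp_tsum_of_le_mul_one_add {a r : ℕ → ℝ} (ha : ∀ n, 0 ≤ a n) (hr : ∀ n, 0 ≤ r n)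
    (hrs : Summable r) (h : ∀ n, a (n + 1) ≤ a n * (1 + r n)) (n : ℕ) :
    a n ≤ a 0 * Real.exp (∑' k, r k) := by
  have hpartial : a n ≤ a 0 * Real.exp (∑ k ∈ Finset.range n, r k) := by
    induction n with
    | zero => simp
    | succ n ih =>
      calc a (n + 1) ≤ a n * Real.exp (r n) :=
            (h n).trans (mul_le_mul_of_nonneg_left (by linarith [Real.add_one_le_exp (r n)]) (ha n))
        _ ≤ a 0 * Real.exp (∑ k ∈ Finset.range n, r k) * Real.exp (r n) :=
            mul_le_mul_of_nonneg_right ih (Real.exp_pos _).le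
        _ = a 0 * Real.exp (∑ k ∈ Finset.range (n + 1), r k) := by
            rw [Finset.sum_range_succ, Real.exp_add, mul_assoc]
  exact hpartial.trans <| mul_le_mul_of_nonneg_left
    (Real.exp_le_exp.2 (hrs.sum_le_tsum _ fun k _ => hr k)) (ha 0)

theorem summable_and_exists_tendsto_of_add_le_add {B D ε : ℕ → ℝ} (hB : ∀ n, 0 ≤ B n)
    (hD : ∀ n, 0 ≤ D n) (hε : Summable ε) (h : ∀ n, B (n + 1) + D n ≤ B n + ε n) :
    Summable D ∧ ∃ L, Tendsto B atTop (𝓝 L) := by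
  set g : ℕ → ℝ := fun n => B n + ∑ k ∈ Finset.range n, D k - ∑ k ∈ Finset.range n, ε k
  have hg_anti : Antitone g := antitone_nat_of_succ_le fun n => by
    simp only [g, Finset.sum_range_succ]
    linarith [h n]
  obtain ⟨c, hc⟩ := hε.hasSum.tendsto_sum_nat.bddAbove_range
  have hε_le : ∀ n, ∑ k ∈ Finset.range n, ε k ≤ c := fun n => hc (mem_range_self n)
  have hDs : Summable D := by
    refine summable_of_sum_range_le (c := B 0 + c) hD fun n => ?_
    have := hg_anti (Nat.zero_le n)
    simp only [g, Finset.sum_range_zero] at this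
    linarith [hB n, hε_le n]
  have hg_bdd : BddBelow (range g) := ⟨-c, by
    rintro _ ⟨n, rfl⟩
    linarith [hB n, hε_le n, Finset.sum_nonneg fun k (_ : k ∈ Finset.range n) => hD k]⟩
  refine ⟨hDs, _, (((tendsto_atTop_ciInf hg_anti hg_bdd).sub hDs.hasSum.tendsto_sum_nat).add
    hε.hasSum.tendsto_sum_nat).congr fun n => ?_⟩
  simp only [g]
  ring

section Metric

variable {E : Type*} [SeminormedAddCommGroup E]

theorem tendsto_zero_of_summable_sq_norm {x : ℕ → E} (h : Summable fun n => ‖x n‖ ^ 2) :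
    Tendsto x atTop (𝓝 0) := by
  rw [tendsto_zero_iff_norm_tendsto_zero]
  simpa [Real.sqrt_sq (norm_nonneg _)] using h.tendsto_atTop_zero.sqrt

theorem tendsto_succ_sub_of_summable_sq_norm {v u : ℕ → E}
    (hvu : Summable fun n => ‖v (n + 1) - u n‖ ^ 2)
    (huv : Summable fun n => ‖u (n + 1) - v (n + 1)‖ ^ 2) :
    Tendsto (fun n => v (n + 1) - v n) atTop (𝓝 0) := by
  rw [← tendsto_add_atTop_iff_nat 1]
  simpa using ((tendsto_zero_of_summable_sq_norm hvu).comp (tendsto_add_atTop_nat 1)).add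
    (tendsto_zero_of_summable_sq_norm huv)

theorem isBounded_range_of_tendsto_sub {x y : ℕ → E} (hx : IsBounded (range x))
    (h : Tendsto (fun n => x n - y n) atTop (𝓝 0)) : IsBounded (range y) :=
  (hx.sub (Metric.isBounded_range_of_tendsto _ h)).subset <| range_subset_iff.2 fun n =>
    ⟨x n, mem_range_self n, x n - y n, mem_range_self n, sub_sub_cancel _ _⟩

theorem Continuous.tendsto_comp_of_tendsto_sub [ProperSpace E] {α : Type*} [PseudoMetricSpace α]
    {g : E → α} (hg : Continuous g) {x y : ℕ → E} (hx : IsBounded (range x))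
    (h : Tendsto (fun n => x n - y n) atTop (𝓝 0)) {L : α}
    (hL : Tendsto (fun n => g (y n)) atTop (𝓝 L)) : Tendsto (fun n => g (x n)) atTop (𝓝 L) := by
  set K := closure (range x ∪ range y)
  have hK : IsCompact K := (hx.union (isBounded_range_of_tendsto_sub hx h)).isCompact_closure
  have hxy : Tendsto (fun n => (y n, x n)) atTop (𝓤 E ⊓ 𝓟 (K ×ˢ K)) := by
    refine tendsto_inf.2 ⟨tendsto_uniformity_iff_dist_tendsto_zero.2 ?_, tendsto_principal.2 ?_⟩
    · simpa [dist_eq_norm, norm_sub_rev] using h.norm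
    · exact Eventually.of_forall fun n =>
        ⟨subset_closure (Or.inr (mem_range_self n)), subset_closure (Or.inl (mem_range_self n))⟩
  exact hL.congr_dist <| tendsto_uniformity_iff_dist_tendsto_zero.1 <|
    Tendsto.comp (hK.uniformContinuousOn_of_continuous hg.continuousOn) hxy

theorem isBounded_sublevel_of_coercive {F : Set E} {J : E → ℝ}
    (hJ : ∀ w : ℕ → E, (∀ n, w n ∈ F) → Tendsto (fun n => ‖w n‖) atTop atTop →
      Tendsto (fun n => J (w n)) atTop atTop) (M : ℝ) :
    IsBounded {x ∈ F | J x ≤ M} := by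
  by_contra hS
  rw [isBounded_iff_forall_norm_le] at hS
  push Not at hS
  choose w hwS hw using fun n : ℕ => hS n
  have hJw := hJ w (fun n => (hwS n).1)
    (tendsto_atTop_mono (fun n => (hw n).le) tendsto_natCast_atTop_atTop)
  obtain ⟨n, hn⟩ := (hJw.eventually_gt_atTop M).exists
  linarith [(hwS n).2]

end Metric

theorem continuous_of_convexOn_add {E : Type*} [NormedAddCommGroup E] [NormedSpace ℝ E]
    [FiniteDimensional ℝ E] {J g : E → ℝ} (hg : Continuous g)
    (h : ConvexOn ℝ univ fun x => J x + g x) : Continuous J := by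
  exact ((continuousOn_univ.1 (h.continuousOn isOpen_univ)).sub hg).congr fun x =>
    add_sub_cancel_right (J x) (g x)

section ProximalPoint

variable {E : Type*} [SeminormedAddCommGroup E] {J : E → ℝ} {ω : ℝ} {F : Set E} {v u : ℕ → E}

/-- `proxObjective J ω c = J_{ω,c}`. Below, `u n` stands for the paper's `v̄_{n+1}`, the minimizer
of `J_{ω, v n}` on `F`. -/
def proxObjective (J : E → ℝ) (ω : ℝ) (c x : E) : ℝ := J x + ω * ‖x - c‖ ^ 2

theorem proxObjective_succ_le (hu : ∀ n, u n ∈ F)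
    (hmin : ∀ n, IsMinOn (proxObjective J ω (v n)) F (u n)) (n : ℕ) :
    proxObjective J ω (v (n + 1)) (u (n + 1)) ≤ J (u n) + ω * ‖v (n + 1) - u n‖ ^ 2 := by
  simpa only [proxObjective, norm_sub_rev (u n)] using isMinOn_iff.1 (hmin (n + 1)) _ (hu n)

variable {C₁ C₂ : ℝ} {p : ℕ → ℝ}

theorem exists_forall_proxObjective_le (hJ : ∀ x, 0 ≤ J x) (hω : 0 ≤ ω) (hu : ∀ n, u n ∈ F)
    (hmin : ∀ n, IsMinOn (proxObjective J ω (v n)) F (u n)) (hC₁ : 0 ≤ C₁) (hC₂ : 0 ≤ C₂)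
    (hp : ∀ n, 0 ≤ p n) (hps : Summable p)
    (herr : ∀ n, ‖v (n + 1) - u n‖ ^ 2 ≤ (C₁ + C₂ * proxObjective J ω (v n) (u n)) * p n) :
    ∃ M, ∀ n, proxObjective J ω (v n) (u n) ≤ M := by
  set m := fun n => proxObjective J ω (v n) (u n)
  have hJm : ∀ n, J (u n) ≤ m n := fun n => le_add_of_nonneg_right (by positivity)
  have hm : ∀ n, 0 ≤ m n := fun n => (hJ _).trans (hJm n)
  have hstep : ∀ n, m (n + 1) + 1 ≤ (m n + 1) * (1 + ω * (C₁ + C₂) * p n) := by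
    intro n
    have hC : C₁ + C₂ * m n ≤ (C₁ + C₂) * (m n + 1) := by nlinarith [hm n]
    have herr' : ω * ‖v (n + 1) - u n‖ ^ 2 ≤ ω * ((C₁ + C₂) * (m n + 1) * p n) :=
      mul_le_mul_of_nonneg_left ((herr n).trans (mul_le_mul_of_nonneg_right hC (hp n))) hω
    linarith [proxObjective_succ_le hu hmin n, hJm n]
  refine ⟨(m 0 + 1) * Real.exp (∑' k, ω * (C₁ + C₂) * p k), fun n => ?_⟩
  have := le_mul_exp_tsum_of_le_mul_one_add (a := fun n => m n + 1) (fun n => by linarith [hm n])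
    (fun n => mul_nonneg (by positivity) (hp n)) (hps.mul_left _) hstep n
  linarith

theorem summable_sq_norm_sub (hJ : ∀ x, 0 ≤ J x) (hω : 0 ≤ ω) (hu : ∀ n, u n ∈ F)
    (hmin : ∀ n, IsMinOn (proxObjective J ω (v n)) F (u n)) (hC₁ : 0 ≤ C₁) (hC₂ : 0 ≤ C₂)
    (hp : ∀ n, 0 ≤ p n) (hps : Summable p)
    (herr : ∀ n, ‖v (n + 1) - u n‖ ^ 2 ≤ (C₁ + C₂ * proxObjective J ω (v n) (u n)) * p n) :
    Summable fun n => ‖v (n + 1) - u n‖ ^ 2 := by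
  obtain ⟨M, hM⟩ := exists_forall_proxObjective_le hJ hω hu hmin hC₁ hC₂ hp hps herr
  refine (hps.mul_left (C₁ + C₂ * M)).of_nonneg_of_le (fun n => by positivity) fun n =>
    (herr n).trans (mul_le_mul_of_nonneg_right ?_ (hp n))
  linarith [mul_le_mul_of_nonneg_left (hM n) hC₂]

theorem summable_sq_norm_sub_and_exists_tendsto (hJ : ∀ x, 0 ≤ J x) (hω : 0 < ω)
    (hu : ∀ n, u n ∈ F) (hmin : ∀ n, IsMinOn (proxObjective J ω (v n)) F (u n))
    (he : Summable fun n => ‖v (n + 1) - u n‖ ^ 2) :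
    (Summable fun n => ‖u (n + 1) - v (n + 1)‖ ^ 2) ∧ ∃ L, Tendsto (fun n => J (u n)) atTop (𝓝 L) := by
  obtain ⟨hD, hL⟩ := summable_and_exists_tendsto_of_add_le_add (B := fun n => J (u n))
    (D := fun n => ω * ‖u (n + 1) - v (n + 1)‖ ^ 2) (fun n => hJ _) (fun n => by positivity)
    (he.mul_left ω) (proxObjective_succ_le hu hmin)
  exact ⟨(summable_mul_left_iff hω.ne').1 hD, hL⟩

end ProximalPoint

theorem statement5 {E E₁ : Type*}
    [NormedAddCommGroup E] [InnerProductSpace ℝ E] [FiniteDimensional ℝ E]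
    [NormedAddCommGroup E₁] [InnerProductSpace ℝ E₁]
    (A : E →ₗ[ℝ] E₁) (f : E₁)
    (J : E → ℝ) (hJ0 : ∀ v, 0 ≤ J v)
    (ω₀ ω : ℝ) (hω₀ : 0 < ω₀) (hω₀ω : ω₀ < ω)
    (hconv : ConvexOn ℝ Set.univ (fun v => J v + ω₀ * ‖v‖ ^ 2))
    (v : ℕ → E) (vbar : ℕ → E)
    (hvbarf : ∀ ℓ ≥ 1, A (vbar ℓ) = f)
    (hvbarmin : ∀ ℓ ≥ 1, ∀ w, A w = f →
      J (vbar ℓ) + ω * ‖vbar ℓ - v (ℓ - 1)‖ ^ 2 ≤ J w + ω * ‖w - v (ℓ - 1)‖ ^ 2)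
    (C₁ C₂ α : ℝ) (hC₁ : 0 ≤ C₁) (hC₂ : 0 ≤ C₂) (hα : 1 < α)
    (herr : ∀ ℓ ≥ 1, ‖v ℓ - vbar ℓ‖ ^ 2 ≤
      (C₁ + C₂ * (J (vbar ℓ) + ω * ‖vbar ℓ - v (ℓ - 1)‖ ^ 2)) * (ℓ : ℝ) ^ (-α)) :
    (Filter.Tendsto (fun ℓ => v (ℓ + 1) - v ℓ) Filter.atTop (nhds 0)) ∧
    (∃ L : ℝ, Filter.Tendsto (fun ℓ => J (vbar (ℓ + 1))) Filter.atTop (nhds L)) ∧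
    (Bornology.IsBounded (Set.range v) →
      ∃ L : ℝ, Filter.Tendsto (fun ℓ => J (v ℓ)) Filter.atTop (nhds L)) ∧
    ((∀ w : ℕ → E, (∀ n, A (w n) = f) →
        Filter.Tendsto (fun n => ‖w n‖) Filter.atTop Filter.atTop →
        Filter.Tendsto (fun n => J (w n)) Filter.atTop Filter.atTop) →
      Bornology.IsBounded (Set.range v)) := by
  set u : ℕ → E := fun n => vbar (n + 1)
  have hu : ∀ n, u n ∈ {w | A w = f} := fun n => hvbarf (n + 1) n.succ_pos
  have hmin : ∀ n, IsMinOn (proxObjective J ω (v n)) {w | A w = f} (u n) := fun n =>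
    isMinOn_iff.2 fun w hw => by simpa only [proxObjective, u, Nat.add_sub_cancel] using hvbarmin (n + 1) n.succ_pos w hw
  have hω : 0 < ω := hω₀.trans hω₀ω
  have hps : Summable fun n : ℕ => ((n + 1 : ℕ) : ℝ) ^ (-α) :=
    (summable_nat_add_iff 1).2 (Real.summable_nat_rpow.2 (by linarith))
  have he := summable_sq_norm_sub hJ0 hω.le hu hmin hC₁ hC₂ (fun n => by positivity) hps
    fun n => by simpa only [proxObjective, u, Nat.add_sub_cancel] using herr (n + 1) n.succ_pos
  obtain ⟨hd, L, hL⟩ := summable_sq_norm_sub_and_exists_tendsto hJ0 hω hu hmin he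
  refine ⟨tendsto_succ_sub_of_summable_sq_norm he hd, ⟨L, hL⟩, fun hv => ⟨L, ?_⟩, fun hcoer => ?_⟩
  · have hJ : Continuous J := continuous_of_convexOn_add (by fun_prop) hconv
    rw [← tendsto_add_atTop_iff_nat 1]
    exact hJ.tendsto_comp_of_tendsto_sub (hv.subset (range_subset_iff.2 fun n => mem_range_self _))
      (tendsto_zero_of_summable_sq_norm he) hL
  · obtain ⟨M, hM⟩ := hL.bddAbove_range
    have hu_bdd : IsBounded (range u) := (isBounded_sublevel_of_coercive hcoer M).subset <|
      range_subset_iff.2 fun n => ⟨hu n, hM (mem_range_self n)⟩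
    rw [← Nat.range_of_succ v]
    exact isBounded_singleton.union <| isBounded_range_of_tendsto_sub hu_bdd <| by
      simpa using (tendsto_zero_of_summable_sq_norm he).neg
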